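/- arXiv:1909.09228 — 3 statements merged into one kernel-verified Lean document; each statement's English description precedes it below -/
import Mathlib

section
/- Under these assumptions, for every agent i the belief μ_{it} converges almost surely, as t → ∞, to ( ∏_{j=1}^m Λ̃_j )^{1/m}, where Λ̃_j = [(R_j+K−1)! / ((K−1)! ∏_{k=1}^K r_{jk}!)] · ∏_{k=1}^K (π*_{jk})^{r_{jk}}. -/
open MeasureTheory ProbabilityTheory Filter Finset

/-- Number of times category `k` was observed among the first `t` signals
(the signal at time `τ ≥ 1` is `X (τ - 1)`, i.e. `X` is indexed from `0`). -/
def sigCount {Ω : Type*} {K : ℕ} (X : ℕ → Ω → Fin K) (k : Fin K) (t : ℕ) (x : Ω) : ℕ :=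
  ((Finset.range t).filter (fun τ => X τ x = k)).card

open Matrix Topology
open scoped Nat

/-! In log-coordinates `u t j = log μ_{jt}` the log-linear rule is linear,
`u (t + 1) = L t + A *ᵥ u t`, where `L t j` is the log-likelihood of agent `j`'s signal.
The likelihoods of agent `j` telescope: their product up to time `t` is a ratio of two Dirichlet
moments, and by the strong law of large numbers it converges almost surely to `Λ̃_j`, i.e.
`∑ s < t, L s j → log Λ̃_j`. Primitivity gives a power `A ^ N` with all entries at least `δ > 0`;
such a matrix shrinks the spread `max u - min u` by the factor `1 - m δ`, so the agents reach
consensus. Column sums equal to one make `∑ j, u t j = ∑ s < t, ∑ j, L s j`, so the consensus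
value is the average `(∑ j, log Λ̃_j) / m`. -/

section Spread

variable {ι : Type*}

noncomputable def spread (v : ι → ℝ) : ℝ :=
  ⨆ p : ι × ι, v p.1 - v p.2

lemma sub_le_spread [Finite ι] (v : ι → ℝ) (i j : ι) : v i - v j ≤ spread v :=
  le_ciSup (f := fun p : ι × ι => v p.1 - v p.2) (Set.finite_range _).bddAbove (i, j)

lemma spread_le [Nonempty ι] {v : ι → ℝ} {c : ℝ} (h : ∀ i j, v i - v j ≤ c) : spread v ≤ c :=
  ciSup_le fun p => h p.1 p.2

lemma spread_nonneg [Finite ι] [Nonempty ι] (v : ι → ℝ) : 0 ≤ spread v := by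
  obtain ⟨i⟩ := ‹Nonempty ι›
  simpa using sub_le_spread v i i

lemma spread_add_le [Finite ι] [Nonempty ι] (v w : ι → ℝ) : spread (v + w) ≤ spread v + spread w :=
  spread_le fun i j => by
    simp only [Pi.add_apply]
    linarith [sub_le_spread v i j, sub_le_spread w i j]

lemma spread_le_two_mul_norm [Fintype ι] [Nonempty ι] (v : ι → ℝ) : spread v ≤ 2 * ‖v‖ :=
  spread_le fun i j => by
    have hi := (Real.norm_eq_abs _ ▸ norm_le_pi_norm v i : |v i| ≤ ‖v‖)
    have hj := (Real.norm_eq_abs _ ▸ norm_le_pi_norm v j : |v j| ≤ ‖v‖)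
    linarith [le_abs_self (v i), neg_abs_le (v j)]

lemma abs_sub_average_le_spread [Fintype ι] [Nonempty ι] (v : ι → ℝ) (i : ι) :
    |v i - (∑ j, v j) / Fintype.card ι| ≤ spread v := by
  have hcard : (0 : ℝ) < Fintype.card ι := Nat.cast_pos.2 Fintype.card_pos
  have hmean : v i - (∑ j, v j) / Fintype.card ι = (∑ j, (v i - v j)) / Fintype.card ι := by
    rw [sum_sub_distrib, sum_const, card_univ, nsmul_eq_mul]
    field_simp
  rw [hmean, abs_div, abs_of_pos hcard, div_le_iff₀ hcard]
  calc |∑ j, (v i - v j)| ≤ ∑ j, |v i - v j| := abs_sum_le_sum_abs _ _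
    _ ≤ ∑ _j : ι, spread v :=
        sum_le_sum fun j _ => abs_sub_le_iff.2 ⟨sub_le_spread v i j, sub_le_spread v j i⟩
    _ = spread v * Fintype.card ι := by simp [mul_comm]

variable [Fintype ι] [Nonempty ι] [DecidableEq ι]

lemma spread_mulVec_le {M : Matrix ι ι ℝ} (hM : M ∈ rowStochastic ℝ ι) {δ : ℝ}
    (hδ : ∀ i j, δ ≤ M i j) (v : ι → ℝ) :
    spread (M *ᵥ v) ≤ (1 - Fintype.card ι * δ) * spread v := by
  obtain ⟨k₀, hk₀⟩ := Finite.exists_min v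
  have hrow := (mem_rowStochastic_iff_sum.1 hM).2
  refine spread_le fun i j => ?_
  have hdiff : (M *ᵥ v) i - (M *ᵥ v) j = ∑ k, (M i k - M j k) * (v k - v k₀) := by
    simp only [mulVec, dotProduct, sub_mul, mul_sub, sum_sub_distrib, ← sum_mul, hrow]
    ring
  have hmin : Fintype.card ι * δ ≤ ∑ k, min (M i k) (M j k) := by
    simpa using sum_le_sum fun k (_ : k ∈ univ) => le_min (hδ i k) (hδ j k)
  calc (M *ᵥ v) i - (M *ᵥ v) j = ∑ k, (M i k - M j k) * (v k - v k₀) := hdiff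
    _ ≤ ∑ k, (M i k - min (M i k) (M j k)) * spread v := sum_le_sum fun k _ => by
        have h₁ := min_le_left (M i k) (M j k)
        have h₂ := min_le_right (M i k) (M j k)
        have h₃ := sub_nonneg.2 (hk₀ k)
        have h₄ := sub_le_spread v k k₀
        nlinarith [mul_nonneg (sub_nonneg.2 h₂) h₃, mul_nonneg (sub_nonneg.2 h₁) (sub_nonneg.2 h₄)]
    _ = (1 - ∑ k, min (M i k) (M j k)) * spread v := by rw [← sum_mul, sum_sub_distrib, hrow]
    _ ≤ (1 - Fintype.card ι * δ) * spread v :=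
        mul_le_mul_of_nonneg_right (by linarith) (spread_nonneg v)

lemma spread_mulVec_le_spread {M : Matrix ι ι ℝ} (hM : M ∈ rowStochastic ℝ ι) (v : ι → ℝ) :
    spread (M *ᵥ v) ≤ spread v := by
  simpa using spread_mulVec_le hM (fun _ _ => nonneg_of_mem_rowStochastic hM) v

end Spread

lemma tendsto_zero_of_le_mul_add {a ε : ℕ → ℝ} {ρ : ℝ} {N : ℕ} (hN : 0 < N)
    (ha : ∀ t, 0 ≤ a t) (hρ₀ : 0 ≤ ρ) (hρ₁ : ρ < 1) (hrec : ∀ t, a (t + N) ≤ ρ * a t + ε t)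
    (hε : Tendsto ε atTop (𝓝 0)) : Tendsto a atTop (𝓝 0) := by
  refine tendsto_order.2 ⟨fun b hb => .of_forall fun t => hb.trans_le (ha t), fun η hη => ?_⟩
  obtain ⟨T, hT⟩ := eventually_atTop.1
    ((tendsto_order.1 hε).2 ((1 - ρ) * (η / 2)) (by nlinarith))
  -- `a - η / 2` contracts by `ρ` every `N` steps once `ε < (1 - ρ) η / 2`
  have hiter : ∀ j t, T ≤ t → a (t + j * N) ≤ η / 2 + ρ ^ j * a t := by
    intro j
    induction j with
    | zero => intro t _; simp; linarith
    | succ j ih =>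
      intro t ht
      have hstep := hrec (t + j * N)
      have hsmall := hT (t + j * N) (by omega)
      have hmul := mul_le_mul_of_nonneg_left (ih t ht) hρ₀
      rw [show t + (j + 1) * N = t + j * N + N by ring]
      linarith [show ρ * (η / 2 + ρ ^ j * a t) + (1 - ρ) * (η / 2) = η / 2 + ρ ^ (j + 1) * a t by
        ring]
  set B := ∑ s ∈ range N, a (T + s)
  obtain ⟨j₀, hj₀⟩ := eventually_atTop.1 ((tendsto_order.1
    ((tendsto_pow_atTop_nhds_zero_of_lt_one hρ₀ hρ₁).mul_const B)).2 (η / 2) (by simpa using hη))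
  filter_upwards [eventually_ge_atTop (T + j₀ * N)] with t ht
  obtain ⟨s, j, hs, hj, rfl⟩ : ∃ s j, s < N ∧ j₀ ≤ j ∧ t = T + s + j * N :=
    ⟨(t - T) % N, (t - T) / N, Nat.mod_lt _ hN, (Nat.le_div_iff_mul_le hN).2 (by omega),
      by have := Nat.mod_add_div (t - T) N; rw [mul_comm] at this; omega⟩
  have hwindow : a (T + s) ≤ B := single_le_sum (fun s _ => ha (T + s)) (mem_range.2 hs)
  calc a (T + s + j * N) ≤ η / 2 + ρ ^ j * a (T + s) := hiter j (T + s) (by omega)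
    _ ≤ η / 2 + ρ ^ j * B := by gcongr
    _ < η := by linarith [hj₀ j hj]

section Consensus

variable {ι : Type*} [Fintype ι] [DecidableEq ι] {A : Matrix ι ι ℝ} {u L : ℕ → ι → ℝ}

lemma exists_eq_pow_mulVec_add_spread_le [Nonempty ι] (hA : A ∈ rowStochastic ℝ ι)
    (hu : ∀ t, u (t + 1) = L t + A *ᵥ u t) (t n : ℕ) :
    ∃ w, u (t + n) = (A ^ n) *ᵥ u t + w ∧ spread w ≤ ∑ s ∈ range n, spread (L (t + s)) := by
  induction n with
  | zero => exact ⟨0, by simp, spread_le fun _ _ => by simp⟩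
  | succ n ih =>
    obtain ⟨w, hw, hspread⟩ := ih
    refine ⟨L (t + n) + A *ᵥ w, ?_, ?_⟩
    · rw [← add_assoc, hu, hw, mulVec_add, mulVec_mulVec, ← pow_succ']
      abel
    · rw [sum_range_succ]
      linarith [spread_add_le (L (t + n)) (A *ᵥ w), spread_mulVec_le_spread hA w]

lemma tendsto_spread_of_primitive [Nonempty ι] (hA : A ∈ rowStochastic ℝ ι) {N : ℕ} (hN : 0 < N)
    (hprim : ∀ i j, 0 < (A ^ N) i j) (hu : ∀ t, u (t + 1) = L t + A *ᵥ u t)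
    (hL : Tendsto L atTop (𝓝 0)) : Tendsto (fun t => spread (u t)) atTop (𝓝 0) := by
  obtain ⟨p, hp⟩ := Finite.exists_min fun p : ι × ι => (A ^ N) p.1 p.2
  set δ := (A ^ N) p.1 p.2
  have hAN : A ^ N ∈ rowStochastic ℝ ι := pow_mem hA N
  have hcard : (0 : ℝ) < Fintype.card ι := Nat.cast_pos.2 Fintype.card_pos
  have hδ : Fintype.card ι * δ ≤ 1 := by
    simpa [sum_row_of_mem_rowStochastic hAN p.1] using
      sum_le_sum fun j (_ : j ∈ univ) => hp (p.1, j)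
  have hspreadL : Tendsto (fun t => spread (L t)) atTop (𝓝 0) :=
    squeeze_zero (fun t => spread_nonneg _) (fun t => spread_le_two_mul_norm _)
      (by simpa using (hL.norm.const_mul 2))
  refine tendsto_zero_of_le_mul_add hN (fun t => spread_nonneg _) (sub_nonneg.2 hδ)
    (by linarith [mul_pos hcard (hprim p.1 p.2)]) (fun t => ?_)
    (by simpa using tendsto_finsetSum (range N) fun s _ => hspreadL.comp (tendsto_add_atTop_nat s))
  obtain ⟨w, hw, hspread⟩ := exists_eq_pow_mulVec_add_spread_le hA hu t N
  rw [hw]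
  linarith [spread_add_le ((A ^ N) *ᵥ u t) w,
    spread_mulVec_le hAN (fun i j => hp (i, j)) (u t)]

lemma sum_apply_eq_add_sum_range (hA : A ∈ colStochastic ℝ ι)
    (hu : ∀ t, u (t + 1) = L t + A *ᵥ u t) (t : ℕ) :
    ∑ j, u t j = ∑ j, u 0 j + ∑ j, (∑ s ∈ range t, L s) j := by
  induction t with
  | zero => simp
  | succ t ih =>
    rw [hu, sum_range_succ]
    simp only [Pi.add_apply, sum_add_distrib, sum_mulVec_of_mem_colStochastic hA, ih]
    ring

theorem tendsto_of_linear_consensus (hA : A ∈ doublyStochastic ℝ ι) {N : ℕ} (hN : 0 < N)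
    (hprim : ∀ i j, 0 < (A ^ N) i j) (hu : ∀ t, u (t + 1) = L t + A *ᵥ u t) {S : ι → ℝ}
    (hL : Tendsto (fun t => ∑ s ∈ range t, L s) atTop (𝓝 S)) (i : ι) :
    Tendsto (fun t => u t i) atTop (𝓝 ((∑ j, u 0 j + ∑ j, S j) / Fintype.card ι)) := by
  have : Nonempty ι := ⟨i⟩
  rw [mem_doublyStochastic_iff_mem_rowStochastic_and_mem_colStochastic] at hA
  have hL₀ : Tendsto L atTop (𝓝 0) := by
    simpa [sum_range_succ] using (hL.comp (tendsto_add_atTop_nat 1)).sub hL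
  have hmean : Tendsto (fun t => (∑ j, u t j) / Fintype.card ι) atTop
      (𝓝 ((∑ j, u 0 j + ∑ j, S j) / Fintype.card ι)) := by
    refine (((tendsto_finsetSum univ fun j _ => tendsto_pi_nhds.1 hL j).const_add _).div_const
      _).congr fun t => ?_
    rw [sum_apply_eq_add_sum_range hA.2 hu t]
  have hdev : Tendsto (fun t => u t i - (∑ j, u t j) / Fintype.card ι) atTop (𝓝 0) :=
    squeeze_zero_norm (fun t => abs_sub_average_le_spread (u t) i)
      (tendsto_spread_of_primitive hA.1 hN hprim hu hL₀)
  simpa using hdev.add hmean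

end Consensus

theorem tendsto_loglinear_consensus {ι : Type*} [Fintype ι] [DecidableEq ι] {A : Matrix ι ι ℝ}
    (hA : A ∈ doublyStochastic ℝ ι) {N : ℕ} (hN : 0 < N) (hprim : ∀ i j, 0 < (A ^ N) i j)
    {W : ι → ℕ → ℝ} {w : ι → ℝ} (hW : ∀ j t, 0 < W j t) (hw : ∀ j, 0 < w j)
    (hWw : ∀ j, Tendsto (W j) atTop (𝓝 (w j))) {μ : ℕ → ι → ℝ} (hμ₀ : ∀ j, μ 0 j = 1)
    (hμ : ∀ t j, μ (t + 1) j = W j (t + 1) / W j t * ∏ k, μ t k ^ A j k) (i : ι) :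
    Tendsto (fun t => μ t i) atTop
      (𝓝 ((∏ j, w j / W j 0) ^ ((1 : ℝ) / Fintype.card ι))) := by
  have hμpos : ∀ t j, 0 < μ t j := by
    intro t
    induction t with
    | zero => simp [hμ₀]
    | succ t ih =>
      intro j
      rw [hμ]
      exact mul_pos (div_pos (hW j _) (hW j _)) (prod_pos fun k _ => Real.rpow_pos_of_pos (ih k) _)
  set L : ℕ → ι → ℝ := fun t j => Real.log (W j (t + 1)) - Real.log (W j t)
  have hlog : ∀ t, (fun j => Real.log (μ (t + 1) j)) = L t + A *ᵥ fun j => Real.log (μ t j) := by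
    intro t
    funext j
    rw [hμ, Real.log_mul (div_pos (hW j _) (hW j _)).ne'
        (prod_pos fun k _ => Real.rpow_pos_of_pos (hμpos t k) _).ne',
      Real.log_div (hW j _).ne' (hW j _).ne',
      Real.log_prod fun k _ => (Real.rpow_pos_of_pos (hμpos t k) _).ne']
    simp only [Real.log_rpow (hμpos t _), Pi.add_apply, mulVec, dotProduct, L]
  have hL : Tendsto (fun t => ∑ s ∈ range t, L s) atTop
      (𝓝 fun j => Real.log (w j) - Real.log (W j 0)) := by
    refine tendsto_pi_nhds.2 fun j => ?_
    simp only [Finset.sum_apply, L, sum_range_sub fun t => Real.log (W j t)]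
    exact ((hWw j).log (hw j).ne').sub_const _
  have hcons := tendsto_of_linear_consensus (u := fun t j => Real.log (μ t j)) hA hN hprim hlog hL i
  have hval : (∏ j, w j / W j 0) ^ ((1 : ℝ) / Fintype.card ι) =
      Real.exp ((∑ j, Real.log (μ 0 j) + ∑ j, (Real.log (w j) - Real.log (W j 0))) /
        Fintype.card ι) := by
    rw [Real.rpow_def_of_pos (prod_pos fun j _ => div_pos (hw j) (hW j 0)),
      Real.log_prod fun j _ => (div_pos (hw j) (hW j 0)).ne', mul_one_div]
    simp only [hμ₀, Real.log_one, sum_const_zero, zero_add]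
    rw [sum_congr rfl fun j _ => Real.log_div (hw j).ne' (hW j 0).ne']
  rw [hval]
  exact ((Real.continuous_exp.tendsto _).comp hcons).congr fun t => Real.exp_log (hμpos t i)

lemma tendsto_natCast_add_div {n : ℕ → ℕ} {c : ℝ}
    (h : Tendsto (fun t => (n t : ℝ) / t) atTop (𝓝 c)) (d : ℕ) :
    Tendsto (fun t => ((n t + d : ℕ) : ℝ) / t) atTop (𝓝 c) := by
  simpa [add_div] using h.add (tendsto_const_div_atTop_nhds_zero_nat (d : ℝ))

lemma tendsto_ascFactorial_div_pow {n : ℕ → ℕ} {c : ℝ}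
    (h : Tendsto (fun t => (n t : ℝ) / t) atTop (𝓝 c)) (r : ℕ) :
    Tendsto (fun t => ((n t).ascFactorial r : ℝ) / (t : ℝ) ^ r) atTop (𝓝 (c ^ r)) := by
  induction r with
  | zero => simp
  | succ r ih =>
    simp only [Nat.ascFactorial_succ, Nat.cast_mul]
    rw [pow_succ']
    exact ((tendsto_natCast_add_div h r).mul ih).congr fun t => by
      rw [div_mul_div_comm, pow_succ']

lemma Nat.ascFactorial_pos_of_pos {n : ℕ} (hn : 0 < n) (k : ℕ) : 0 < n.ascFactorial k :=
  (pow_pos hn k).trans_le (Nat.pow_succ_le_ascFactorial n k)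

section DirichletMoment

variable {K : ℕ}

/-- For `∑ k, n k = t` and `∑ k, r k = R` this is the moment `𝔼[∏ k, p k ^ r k]` of the
Dirichlet distribution with parameters `n + 1`; the product of the uncertain likelihoods of the
first `t` signals telescopes into a ratio of two of these moments. -/
noncomputable def dirichletMoment (r : Fin K → ℕ) (R t : ℕ) (n : Fin K → ℕ) : ℝ :=
  ((∏ k, (n k + 1).ascFactorial (r k) : ℕ) : ℝ) / ((t + K).ascFactorial R : ℕ)

lemma dirichletMoment_pos (hK : 0 < K) (r : Fin K → ℕ) (R t : ℕ) (n : Fin K → ℕ) :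
    0 < dirichletMoment r R t n := by
  have hden := Nat.ascFactorial_pos_of_pos (n := t + K) (by omega) R
  unfold dirichletMoment
  have := prod_pos fun k (_ : k ∈ univ) => Nat.ascFactorial_pos (n k) (r k)
  positivity

lemma dirichletMoment_zero (hK : 0 < K) (r : Fin K → ℕ) (R : ℕ) :
    (dirichletMoment r R 0 fun _ => 0)⁻¹ =
      ((R + K - 1)! : ℝ) / ((K - 1)! * ∏ k, ((r k)! : ℝ)) := by
  have h := Nat.factorial_mul_ascFactorial' K R hK
  rw [dirichletMoment, inv_div, add_comm R, ← h]
  simp only [zero_add, Nat.one_ascFactorial, Nat.cast_prod, Nat.cast_mul]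
  exact (mul_div_mul_left _ _ (Nat.cast_ne_zero.2 (Nat.factorial_ne_zero _))).symm

lemma prod_ascFactorial_update {α : Type*} [Fintype α] [DecidableEq α] (r n : α → ℕ) (a : α) :
    (∏ k, (Function.update n a (n a + 1) k + 1).ascFactorial (r k)) * (n a + 1) =
      (∏ k, (n k + 1).ascFactorial (r k)) * (n a + 1 + r a) := by
  rw [Fintype.prod_eq_mul_prod_compl a, Fintype.prod_eq_mul_prod_compl a (fun k => _),
    Function.update_self, prod_congr rfl fun k hk =>
      by rw [Function.update_of_ne (mem_compl.1 hk ∘ mem_singleton.2)]]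
  linear_combination (∏ k ∈ {a}ᶜ, (n k + 1).ascFactorial (r k)) *
    Nat.succ_ascFactorial (n a + 1) (r a)

lemma dirichletMoment_succ (hK : 0 < K) (r : Fin K → ℕ) (R t : ℕ) (n : Fin K → ℕ) (a : Fin K) :
    dirichletMoment r R (t + 1) (Function.update n a (n a + 1)) =
      dirichletMoment r R t n *
        ((((r a + n a + 1) * (t + K) : ℕ) : ℝ) / (((R + t + K) * (n a + 1) : ℕ) : ℝ)) := by
  have hnum := congrArg (Nat.cast : ℕ → ℝ) (prod_ascFactorial_update r n a)
  have hden := congrArg (Nat.cast : ℕ → ℝ) (Nat.succ_ascFactorial (t + K) R)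
  have hD : 0 < (t + K).ascFactorial R := Nat.ascFactorial_pos_of_pos (by omega) R
  rw [dirichletMoment, dirichletMoment, show t + 1 + K = t + K + 1 by ring, div_mul_div_comm,
    div_eq_div_iff]
  · push_cast at hnum hden ⊢
    linear_combination ((t + K).ascFactorial R * (R + t + K : ℝ)) * hnum -
      ((∏ k, (n k + 1).ascFactorial (r k) : ℝ) * (r a + n a + 1)) * hden
  · positivity
  · positivity

lemma tendsto_dirichletMoment (r : Fin K → ℕ) {R : ℕ} (hR : R = ∑ k, r k) {n : Fin K → ℕ → ℕ}
    {π : Fin K → ℝ} (hn : ∀ k, Tendsto (fun t => (n k t : ℝ) / t) atTop (𝓝 (π k))) :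
    Tendsto (fun t => dirichletMoment r R t (fun k => n k t)) atTop (𝓝 (∏ k, π k ^ r k)) := by
  have hnum : Tendsto (fun t => ∏ k, ((n k t + 1).ascFactorial (r k) : ℝ) / (t : ℝ) ^ r k) atTop
      (𝓝 (∏ k, π k ^ r k)) :=
    tendsto_finsetProd _ fun k _ =>
      tendsto_ascFactorial_div_pow (n := fun t => n k t + 1) (tendsto_natCast_add_div (hn k) 1) _
  have hself : Tendsto (fun t : ℕ => (t : ℝ) / t) atTop (𝓝 1) :=
    tendsto_const_nhds.congr' <| (eventually_ne_atTop 0).mono fun t ht =>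
      (div_self (Nat.cast_ne_zero.2 ht)).symm
  have hden : Tendsto (fun t => ((t + K).ascFactorial R : ℝ) / (t : ℝ) ^ R) atTop (𝓝 1) := by
    simpa using tendsto_ascFactorial_div_pow (n := fun t => t + K)
      (tendsto_natCast_add_div (n := id) hself K) R
  have hlim := hnum.div hden one_ne_zero
  rw [div_one] at hlim
  refine hlim.congr' ?_
  filter_upwards [eventually_ne_atTop 0] with t ht
  simp only [Pi.div_apply]
  rw [dirichletMoment, prod_div_distrib, prod_pow_eq_pow_sum, ← hR,
    div_div_div_cancel_right₀ (pow_ne_zero _ (Nat.cast_ne_zero.2 ht))]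
  push_cast
  rfl

end DirichletMoment

section Signals

variable {Ω : Type*} {K : ℕ}

lemma sigCount_zero (Y : ℕ → Ω → Fin K) (k : Fin K) (x : Ω) : sigCount Y k 0 x = 0 := by
  simp [sigCount]

lemma sigCount_succ (Y : ℕ → Ω → Fin K) (t : ℕ) (x : Ω) :
    (fun k => sigCount Y k (t + 1) x) =
      Function.update (fun k => sigCount Y k t x) (Y t x) (sigCount Y (Y t x) t x + 1) := by
  funext k
  rcases eq_or_ne k (Y t x) with rfl | hk
  · simp [sigCount, range_add_one, filter_insert]
  · simp [sigCount, range_add_one, filter_insert, hk, Ne.symm hk]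

variable [MeasurableSpace Ω] {P : Measure Ω}

lemma identDistrib_of_measure_preimage_singleton {α : Type*} [MeasurableSpace α]
    [MeasurableSingletonClass α] [Countable α] {Y Y' : Ω → α} (hY : Measurable Y)
    (hY' : Measurable Y') (h : ∀ a, P (Y ⁻¹' {a}) = P (Y' ⁻¹' {a})) : IdentDistrib Y Y' P P :=
  ⟨hY.aemeasurable, hY'.aemeasurable, Measure.ext_of_singleton fun a => by
    rw [Measure.map_apply hY (measurableSet_singleton a),
      Measure.map_apply hY' (measurableSet_singleton a), h]⟩

lemma ae_tendsto_sigCount_div [IsProbabilityMeasure P] {Y : ℕ → Ω → Fin K} (hY₀ : Measurable (Y 0))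
    (hindep : Pairwise fun s t => IndepFun (Y s) (Y t) P)
    (hident : ∀ t, IdentDistrib (Y t) (Y 0) P P) (k : Fin K) :
    ∀ᵐ x ∂P, Tendsto (fun t => (sigCount Y k t x : ℝ) / t) atTop (𝓝 (P.real (Y 0 ⁻¹' {k}))) := by
  set f : Fin K → ℝ := ({k} : Set (Fin K)).indicator 1
  have hf : Measurable f := measurable_of_finite f
  have hint : Integrable (f ∘ Y 0) P :=
    .of_bound (hf.comp hY₀).aestronglyMeasurable 1 (.of_forall fun x => by
      simp only [Function.comp_apply, f, Set.indicator_apply]; split_ifs <;> simp)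
  have hmean : ∫ x, (f ∘ Y 0) x ∂P = P.real (Y 0 ⁻¹' {k}) := by
    rw [← integral_indicator_one (hY₀ (measurableSet_singleton k))]
    rfl
  have hslln := strong_law_ae_real (fun t => f ∘ Y t) hint
    (fun s t hst => (hindep hst).comp hf hf) fun t => (hident t).comp hf
  rw [hmean] at hslln
  filter_upwards [hslln] with x hx
  refine hx.congr fun t => ?_
  simp only [sigCount, natCast_card_filter, Function.comp_apply, f, Set.indicator_apply,
    Set.mem_singleton_iff, Pi.one_apply]

end Signals

theorem loglinear_uncertain_beliefs_tendsto_general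
    {Ω : Type*} [MeasurableSpace Ω] (P : Measure Ω) [IsProbabilityMeasure P]
    (m : ℕ) (K : ℕ) (hK : 2 ≤ K)
    (A : Matrix (Fin m) (Fin m) ℝ)
    (hA_nonneg : ∀ i j, 0 ≤ A i j)
    (hA_row : ∀ i, ∑ j, A i j = 1) (hA_col : ∀ j, ∑ i, A i j = 1)
    (hA_prim : ∃ N : ℕ, 1 ≤ N ∧ ∀ i j, 0 < (A ^ N) i j)
    (πstar : Fin m → Fin K → ℝ)
    (hstar_pos : ∀ i k, 0 < πstar i k)
    (X : Fin m → ℕ → Ω → Fin K) (hX_meas : ∀ i t, Measurable (X i t))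
    (hX_indep : iIndepFun
      (fun p : Fin m × ℕ => X p.1 p.2) P)
    (hX_law : ∀ i t k, P {x | X i t x = k} = ENNReal.ofReal (πstar i k))
    (r : Fin m → Fin K → ℕ) (R : Fin m → ℕ) (hR : ∀ i, R i = ∑ k, r i k)
    (μ : ℕ → Fin m → Ω → ℝ)
    (hμ0 : ∀ i x, μ 0 i x = 1)
    (hμ : ∀ t i x, μ (t + 1) i x =
      (((r i (X i t x) + sigCount (X i) (X i t x) t x + 1) * (t + 1 + K - 1) : ℕ) : ℝ) /
          (((R i + (t + 1) + K - 1) * (sigCount (X i) (X i t x) t x + 1) : ℕ) : ℝ) *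
        ∏ j, (μ t j x) ^ (A i j)) :
    ∀ i : Fin m, ∀ᵐ x ∂P, Tendsto (fun t => μ t i x) atTop
      (nhds ((∏ j, ((((R j + K - 1).factorial : ℕ) : ℝ) /
            ((((K - 1).factorial : ℕ) : ℝ) * ∏ k, (((r j k).factorial : ℕ) : ℝ)) *
          ∏ k, πstar j k ^ r j k)) ^ ((1 : ℝ) / (m : ℝ)))) := by
  intro i
  have hK₀ : 0 < K := by omega
  obtain ⟨N, hN, hprim⟩ := hA_prim
  have hfreq : ∀ᵐ x ∂P, ∀ j k,
      Tendsto (fun t => (sigCount (X j) k t x : ℝ) / t) atTop (𝓝 (πstar j k)) := by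
    refine ae_all_iff.2 fun j => ae_all_iff.2 fun k => ?_
    have hident : ∀ t, IdentDistrib (X j t) (X j 0) P P := fun t =>
      identDistrib_of_measure_preimage_singleton (hX_meas j t) (hX_meas j 0)
        fun a => (hX_law j t a).trans (hX_law j 0 a).symm
    simpa [measureReal_def, Set.preimage, hX_law, (hstar_pos j k).le] using
      ae_tendsto_sigCount_div (hX_meas j 0)
        (fun s t hst => hX_indep.indepFun (show ((j, s) : Fin m × ℕ) ≠ (j, t) by simp [hst]))
        hident k
  filter_upwards [hfreq] with x hx
  set W : Fin m → ℕ → ℝ := fun j t => dirichletMoment (r j) (R j) t fun k => sigCount (X j) k t x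
  have hW : ∀ j t, 0 < W j t := fun j t => dirichletMoment_pos hK₀ _ _ _ _
  have hμW : ∀ t j, μ (t + 1) j x = W j (t + 1) / W j t * ∏ k, μ t k x ^ A j k := by
    intro t j
    simp only [W, sigCount_succ, dirichletMoment_succ hK₀]
    rw [mul_div_cancel_left₀ _ (hW j t).ne', hμ, show t + 1 + K - 1 = t + K by omega,
      show R j + (t + 1) + K - 1 = R j + t + K by omega]
  have hlim := tendsto_loglinear_consensus (μ := fun t j => μ t j x)
    (mem_doublyStochastic_iff_sum.2 ⟨hA_nonneg, hA_row, hA_col⟩) hN hprim hW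
    (fun j => prod_pos fun k _ => pow_pos (hstar_pos j k) _)
    (fun j => tendsto_dirichletMoment (r j) (hR j) (hx j)) (hμ0 · x) hμW i
  convert hlim using 4 with j
  · simp only [W, sigCount_zero]
    rw [div_eq_mul_inv (∏ k, _), dirichletMoment_zero hK₀, mul_comm]
  · simp

/-- Main theorem (log-linear rule with uncertain models): the beliefs converge a.s. to
`(∏_j Λ̃_j)^{1/m}` where `Λ̃_j = [(R_j+K−1)!/((K−1)! ∏ₖ r_{jk}!)] ∏ₖ (π*_{jk})^{r_{jk}}`. -/
theorem loglinear_uncertain_beliefs_tendsto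
    {Ω : Type*} [MeasurableSpace Ω] (P : Measure Ω) [IsProbabilityMeasure P]
    (m : ℕ) (hm : 1 ≤ m) (K : ℕ) (hK : 2 ≤ K)
    (A : Matrix (Fin m) (Fin m) ℝ)
    (hA_nonneg : ∀ i j, 0 ≤ A i j)
    (hA_row : ∀ i, ∑ j, A i j = 1) (hA_col : ∀ j, ∑ i, A i j = 1)
    (hA_prim : ∃ N : ℕ, 1 ≤ N ∧ ∀ i j, 0 < (A ^ N) i j)
    (πstar : Fin m → Fin K → ℝ)
    (hstar_pos : ∀ i k, 0 < πstar i k) (hstar_sum : ∀ i, ∑ k, πstar i k = 1)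
    (X : Fin m → ℕ → Ω → Fin K) (hX_meas : ∀ i t, Measurable (X i t))
    (hX_indep : iIndepFun
      (fun p : Fin m × ℕ => X p.1 p.2) P)
    (hX_law : ∀ i t k, P {x | X i t x = k} = ENNReal.ofReal (πstar i k))
    (r : Fin m → Fin K → ℕ) (R : Fin m → ℕ) (hR : ∀ i, R i = ∑ k, r i k)
    (μ : ℕ → Fin m → Ω → ℝ)
    (hμ0 : ∀ i x, μ 0 i x = 1)
    (hμ : ∀ t i x, μ (t + 1) i x =
      (((r i (X i t x) + sigCount (X i) (X i t x) t x + 1) * (t + 1 + K - 1) : ℕ) : ℝ) /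
          (((R i + (t + 1) + K - 1) * (sigCount (X i) (X i t x) t x + 1) : ℕ) : ℝ) *
        ∏ j, (μ t j x) ^ (A i j)) :
    ∀ i : Fin m, ∀ᵐ x ∂P, Tendsto (fun t => μ t i x) atTop
      (nhds ((∏ j, ((((R j + K - 1).factorial : ℕ) : ℝ) /
            ((((K - 1).factorial : ℕ) : ℝ) * ∏ k, (((r j k).factorial : ℕ) : ℝ)) *
          ∏ k, πstar j k ^ r j k)) ^ ((1 : ℝ) / (m : ℝ)))) :=
  loglinear_uncertain_beliefs_tendsto_general P m K hK A hA_nonneg hA_row hA_col hA_prim πstar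
    hstar_pos X hX_meas hX_indep hX_law r R hR μ hμ0 hμ
end

section
/- For every t ≥ 1, every count vector n ∈ ℕ^K with ∑_{k=1}^K n_k = t − 1, and every category k, the uncertain likelihood update satisfies 1/(R + K) ≤ (r_k + n_k + 1)(t + K − 1) / ((R + t + K − 1)(n_k + 1)) ≤ max_{k'} r_{k'} + 1. -/
/-!
The update factors as `(r_k + n_k + 1)/(n_k + 1) · T/(R + T)` with `T = t + K − 1 ≥ 1`.
The first factor lies in `[1, r_k + 1]` and the second in `[1/(R + 1), 1]`, so the product lies
in `[1/(R + K), max r + 1]`.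
-/

open Finset

section Factors

variable {𝕜 : Type*} [Field 𝕜] [LinearOrder 𝕜] [IsStrictOrderedRing 𝕜]

lemma one_le_add_succ_div_succ {a m : 𝕜} (ha : 0 ≤ a) (hm : 0 ≤ m) :
    1 ≤ (a + m + 1) / (m + 1) := by
  rw [one_le_div (by positivity)]
  linarith

lemma add_succ_div_succ_le {a m : 𝕜} (ha : 0 ≤ a) (hm : 0 ≤ m) :
    (a + m + 1) / (m + 1) ≤ a + 1 := by
  rw [div_le_iff₀ (by positivity)]
  nlinarith

lemma one_div_add_le_div_add {R T K : 𝕜} (hR : 0 ≤ R) (hT : 1 ≤ T) (hK : 1 ≤ K) :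
    1 / (R + K) ≤ T / (R + T) := by
  rw [div_le_div_iff₀ (by linarith) (by linarith)]
  nlinarith

lemma div_add_le_one {R T : 𝕜} (hR : 0 ≤ R) (hT : 0 ≤ T) : T / (R + T) ≤ 1 :=
  div_le_one_of_le₀ (by linarith) (by linarith)

end Factors

lemma natCast_update_eq_mul (a m R t K : ℕ) (htK : 1 ≤ t + K) :
    (((a + m + 1) * (t + K - 1) : ℕ) : ℝ) / (((R + t + K - 1) * (m + 1) : ℕ) : ℝ) =
      (a + m + 1) / (m + 1) * (((t + K - 1 : ℕ) : ℝ) / (R + ((t + K - 1 : ℕ) : ℝ))) := by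
  rw [show R + t + K - 1 = R + (t + K - 1) by omega]
  push_cast
  rw [mul_comm ((R : ℝ) + _), mul_div_mul_comm]

theorem uncertain_update_bounds_general (K : ℕ) (hK : 2 ≤ K)
    (r : Fin K → ℕ) (R : ℕ)
    (t : ℕ) (n : Fin K → ℕ) (k : Fin K) :
    (1 : ℝ) / (R + K) ≤
        (((r k + n k + 1) * (t + K - 1) : ℕ) : ℝ) /
          (((R + t + K - 1) * (n k + 1) : ℕ) : ℝ) ∧
      (((r k + n k + 1) * (t + K - 1) : ℕ) : ℝ) /
          (((R + t + K - 1) * (n k + 1) : ℕ) : ℝ) ≤ ((Finset.univ.sup r : ℕ) : ℝ) + 1 := by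
  rw [natCast_update_eq_mul _ _ _ _ _ (by omega)]
  have hT : (1 : ℝ) ≤ ((t + K - 1 : ℕ) : ℝ) := by exact_mod_cast (by omega : 1 ≤ t + K - 1)
  have hK1 : (1 : ℝ) ≤ K := by exact_mod_cast (by omega : 1 ≤ K)
  have hr : (r k : ℝ) ≤ (univ.sup r : ℕ) := by exact_mod_cast le_sup (mem_univ k)
  have hR := R.cast_nonneg' (α := ℝ)
  have hrk := (r k).cast_nonneg' (α := ℝ)
  have hnk := (n k).cast_nonneg' (α := ℝ)
  constructor
  · calc (1 : ℝ) / (R + K) = 1 * (1 / (R + K)) := (one_mul _).symm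
      _ ≤ _ := mul_le_mul (one_le_add_succ_div_succ hrk hnk) (one_div_add_le_div_add hR hT hK1)
          (by positivity) (by positivity)
  · calc _ ≤ ((r k : ℝ) + 1) * 1 :=
          mul_le_mul (add_succ_div_succ_le hrk hnk) (div_add_le_one hR (by positivity))
            (by positivity) (by positivity)
      _ ≤ _ := by linarith

/-- Bounds on the uncertain likelihood update: for every `t ≥ 1`, every count vector
`n` with `∑ₖ nₖ = t − 1`, and every category `k`,
`1/(R+K) ≤ (r_k + n_k + 1)(t + K − 1)/((R + t + K − 1)(n_k + 1)) ≤ maxₖ' r_{k'} + 1`. -/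
theorem uncertain_update_bounds (K : ℕ) (hK : 2 ≤ K)
    (r : Fin K → ℕ) (R : ℕ) (hR : R = ∑ k, r k)
    (t : ℕ) (ht : 1 ≤ t) (n : Fin K → ℕ) (hn : ∑ k, n k = t - 1) (k : Fin K) :
    (1 : ℝ) / (R + K) ≤
        (((r k + n k + 1) * (t + K - 1) : ℕ) : ℝ) /
          (((R + t + K - 1) * (n k + 1) : ℕ) : ℝ) ∧
      (((r k + n k + 1) * (t + K - 1) : ℕ) : ℝ) /
          (((R + t + K - 1) * (n k + 1) : ℕ) : ℝ) ≤ ((Finset.univ.sup r : ℕ) : ℝ) + 1 :=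
  uncertain_update_bounds_general K hK r R t n k
end

section
/- The Centralized Average divergence is sandwiched by the average Kullback–Leibler divergence: (1/m) ∑_{i=1}^m D_KL(π*_i ‖ π_{iθ}) ≥ D_CA(Π*‖Π_θ) ≥ 0. Moreover, D_CA(Π*‖Π_θ) = 0 if and only if π_{iθ} = π*_i for every i. -/
/-!
Weight each `κ : Fin m → Fin K` by `w κ = ∏ᵢ π*_{i κᵢ}`. Each ratio `rᵢ = π_{iθ} / π*_i` has
mean `1` under the `i`-th marginal of `w`, so the mean ratio `f κ = (1/m) ∑ᵢ rᵢ (κ i)` has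
`w`-mean `1`, and `D_CA = -∑_κ w κ log (f κ)`. Then `log f ≤ f - 1` gives `D_CA ≥ 0`, and
concavity of `log` gives `log (f κ) ≥ (1/m) ∑ᵢ log (rᵢ (κ i))`, whose `w`-mean is
`-(1/m) ∑ᵢ D_KL(π*_i ‖ π_{iθ})`. If `D_CA = 0`, equality in `log f ≤ f - 1` forces `f ≡ 1`;
changing one coordinate of `κ` then shows that each `rᵢ` is constant, and a constant ratio of
two probability vectors is `1`.
-/

open Finset

/-- Kullback–Leibler divergence between two probability vectors on `Fin K`. -/
noncomputable def KLdiv {K : ℕ} (p q : Fin K → ℝ) : ℝ :=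
  ∑ k, p k * Real.log (p k / q k)

/-- Centralized Average divergence: `D_CA(Π*‖Π_θ) =
−∑_{k_1,…,k_m} (∏ᵢ π*_{i kᵢ}) log((1/m) ∑ᵢ π_{i kᵢ θ}/π*_{i kᵢ})`. -/
noncomputable def DCA {m K : ℕ} (πstar πθ : Fin m → Fin K → ℝ) : ℝ :=
  -∑ κ : Fin m → Fin K,
      (∏ i, πstar i (κ i)) * Real.log ((1 / (m : ℝ)) * ∑ i, πθ i (κ i) / πstar i (κ i))

open Real

section ProductWeights

variable {ι α : Type*} [Fintype ι] [DecidableEq ι]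

lemma apply_eq_of_sum_apply_eq {r : ι → α → ℝ} {c : ℝ} (h : ∀ κ : ι → α, ∑ i, r i (κ i) = c)
    (i : ι) (k k' : α) : r i k = r i k' := by
  have split (k'' : α) :
      ∑ j, r j (Function.update (fun _ => k) i k'' j) = r i k'' + ∑ j ∈ univ.erase i, r j k := by
    rw [← add_sum_erase _ _ (mem_univ i)]
    congr 1
    · simp
    · exact sum_congr rfl fun j hj => by simp [Function.update_of_ne (ne_of_mem_erase hj)]
  have := (split k).symm.trans ((h _).trans ((h _).symm.trans (split k')))
  linarith

variable [Fintype α]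

lemma sum_pi_prod_eq_one {p : ι → α → ℝ} (hp : ∀ i, ∑ k, p i k = 1) :
    ∑ κ : ι → α, ∏ i, p i (κ i) = 1 := by
  simp [← Fintype.prod_sum, hp]

lemma sum_pi_prod_mul_apply {p : ι → α → ℝ} (hp : ∀ i, ∑ k, p i k = 1) (j : ι) (h : α → ℝ) :
    ∑ κ : ι → α, (∏ i, p i (κ i)) * h (κ j) = ∑ k, p j k * h k := by
  have factor (κ : ι → α) : (∏ i, p i (κ i)) * h (κ j)
      = ∏ i, p i (κ i) * if i = j then h (κ i) else 1 := by
    rw [prod_mul_distrib, prod_ite_eq' univ j]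
    simp
  calc ∑ κ : ι → α, (∏ i, p i (κ i)) * h (κ j)
      = ∑ κ : ι → α, ∏ i, p i (κ i) * if i = j then h (κ i) else 1 :=
        sum_congr rfl fun κ _ => factor κ
    _ = ∏ i, ∑ k, p i k * if i = j then h k else 1 :=
        (Fintype.prod_sum fun i k => p i k * if i = j then h k else 1).symm
    _ = ∑ k, p j k * h k := by
        rw [prod_eq_single j (fun i _ hij => by simp [hij, hp i]) (by simp)]
        simp

lemma sum_pi_prod_mul_sum_apply {p : ι → α → ℝ} (hp : ∀ i, ∑ k, p i k = 1) (g : ι → α → ℝ) :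
    ∑ κ : ι → α, (∏ i, p i (κ i)) * ∑ i, g i (κ i) = ∑ i, ∑ k, p i k * g i k := by
  simp_rw [mul_sum]
  rw [sum_comm]
  exact sum_congr rfl fun i _ => sum_pi_prod_mul_apply hp i (g i)

end ProductWeights

section WeightedLog

variable {β : Type*} [Fintype β] {w f : β → ℝ}

lemma sum_mul_log_nonpos (hw : ∀ b, 0 ≤ w b) (hf : ∀ b, 0 < f b)
    (hwf : ∑ b, w b * f b = ∑ b, w b) : ∑ b, w b * log (f b) ≤ 0 :=
  calc ∑ b, w b * log (f b) ≤ ∑ b, w b * (f b - 1) :=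
        sum_le_sum fun b _ => mul_le_mul_of_nonneg_left (log_le_sub_one_of_pos (hf b)) (hw b)
    _ = 0 := by simp [mul_sub, sum_sub_distrib, hwf]

lemma eq_one_of_sum_mul_log_eq_zero (hw : ∀ b, 0 < w b) (hf : ∀ b, 0 < f b)
    (hwf : ∑ b, w b * f b = ∑ b, w b) (hlog : ∑ b, w b * log (f b) = 0) (b : β) : f b = 1 := by
  have hgap : ∑ b, w b * (f b - 1 - log (f b)) = 0 := by
    simp [mul_sub, sum_sub_distrib, hwf, hlog]
  have hgap_nonneg (b : β) : 0 ≤ w b * (f b - 1 - log (f b)) :=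
    mul_nonneg (hw b).le (by linarith [log_le_sub_one_of_pos (hf b)])
  have hb := (sum_eq_zero_iff_of_nonneg fun b _ => hgap_nonneg b).1 hgap b (mem_univ b)
  by_contra hb1
  have := mul_pos (hw b) (sub_pos.2 (log_lt_sub_one_of_pos (hf b) hb1))
  linarith

end WeightedLog

lemma mean_log_le_log_mean {ι : Type*} [Fintype ι] [Nonempty ι] {x : ι → ℝ}
    (hx : ∀ i, 0 < x i) :
    1 / (Fintype.card ι : ℝ) * ∑ i, log (x i) ≤ log (1 / (Fintype.card ι : ℝ) * ∑ i, x i) := by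
  have := strictConcaveOn_log_Ioi.concaveOn.le_map_sum (t := univ)
    (w := fun _ => 1 / (Fintype.card ι : ℝ)) (p := x) (fun _ _ => by positivity)
    (by simp) (fun i _ => hx i)
  simpa [mul_sum] using this

section DCA

variable {m K : ℕ} {πstar πθ : Fin m → Fin K → ℝ}

noncomputable def meanRatio (πstar πθ : Fin m → Fin K → ℝ) (κ : Fin m → Fin K) : ℝ :=
  (1 / (m : ℝ)) * ∑ i, πθ i (κ i) / πstar i (κ i)

lemma DCA_eq_neg_sum_mul_log_meanRatio :
    DCA πstar πθ = -∑ κ, (∏ i, πstar i (κ i)) * log (meanRatio πstar πθ κ) := rfl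

lemma meanRatio_pos (hm : 0 < m) (hstar_pos : ∀ i k, 0 < πstar i k)
    (hθ_pos : ∀ i k, 0 < πθ i k) (κ : Fin m → Fin K) : 0 < meanRatio πstar πθ κ := by
  have : Nonempty (Fin m) := ⟨⟨0, hm⟩⟩
  exact mul_pos (by positivity)
    (sum_pos (fun i _ => div_pos (hθ_pos i (κ i)) (hstar_pos i (κ i))) univ_nonempty)

lemma sum_mul_meanRatio (hm : 0 < m) (hstar_pos : ∀ i k, 0 < πstar i k)
    (hstar_sum : ∀ i, ∑ k, πstar i k = 1) (hθ_sum : ∀ i, ∑ k, πθ i k = 1) :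
    ∑ κ, (∏ i, πstar i (κ i)) * meanRatio πstar πθ κ = 1 := by
  simp_rw [meanRatio, mul_left_comm _ (1 / (m : ℝ)), ← mul_sum]
  rw [sum_pi_prod_mul_sum_apply hstar_sum fun i k => πθ i k / πstar i k]
  simp_rw [mul_div_cancel₀ _ (hstar_pos _ _).ne', hθ_sum]
  simp [hm.ne']

lemma DCA_nonneg (hm : 0 < m) (hstar_pos : ∀ i k, 0 < πstar i k)
    (hθ_pos : ∀ i k, 0 < πθ i k) (hstar_sum : ∀ i, ∑ k, πstar i k = 1)
    (hθ_sum : ∀ i, ∑ k, πθ i k = 1) :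
    0 ≤ DCA πstar πθ := by
  rw [DCA_eq_neg_sum_mul_log_meanRatio, neg_nonneg]
  exact sum_mul_log_nonpos (fun κ => (prod_pos fun i _ => hstar_pos i (κ i)).le)
    (meanRatio_pos hm hstar_pos hθ_pos)
    (by rw [sum_mul_meanRatio hm hstar_pos hstar_sum hθ_sum, sum_pi_prod_eq_one hstar_sum])

lemma DCA_le_mean_KLdiv (hm : 0 < m) (hstar_pos : ∀ i k, 0 < πstar i k)
    (hθ_pos : ∀ i k, 0 < πθ i k) (hstar_sum : ∀ i, ∑ k, πstar i k = 1) :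
    DCA πstar πθ ≤ (1 / (m : ℝ)) * ∑ i, KLdiv (πstar i) (πθ i) := by
  have : Nonempty (Fin m) := ⟨⟨0, hm⟩⟩
  have hjensen (κ : Fin m → Fin K) :
      (1 / (m : ℝ)) * ∑ i, log (πθ i (κ i) / πstar i (κ i)) ≤ log (meanRatio πstar πθ κ) := by
    simpa [meanRatio] using
      mean_log_le_log_mean fun i => div_pos (hθ_pos i (κ i)) (hstar_pos i (κ i))
  have hKL (i : Fin m) :
      ∑ k, πstar i k * log (πθ i k / πstar i k) = -KLdiv (πstar i) (πθ i) := by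
    simp_rw [KLdiv, ← sum_neg_distrib, ← mul_neg, ← log_inv, inv_div]
  rw [DCA_eq_neg_sum_mul_log_meanRatio]
  calc -∑ κ, (∏ i, πstar i (κ i)) * log (meanRatio πstar πθ κ)
      ≤ -∑ κ, (∏ i, πstar i (κ i)) * ((1 / (m : ℝ)) * ∑ i, log (πθ i (κ i) / πstar i (κ i))) :=
        neg_le_neg <| sum_le_sum fun κ _ =>
          mul_le_mul_of_nonneg_left (hjensen κ) (prod_pos fun i _ => hstar_pos i (κ i)).le
    _ = (1 / (m : ℝ)) * ∑ i, KLdiv (πstar i) (πθ i) := by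
        simp_rw [mul_left_comm _ (1 / (m : ℝ)), ← mul_sum]
        rw [sum_pi_prod_mul_sum_apply hstar_sum fun i k => log (πθ i k / πstar i k)]
        simp_rw [hKL, sum_neg_distrib]
        ring

lemma eq_of_DCA_eq_zero (hm : 0 < m) (hstar_pos : ∀ i k, 0 < πstar i k)
    (hθ_pos : ∀ i k, 0 < πθ i k) (hstar_sum : ∀ i, ∑ k, πstar i k = 1)
    (hθ_sum : ∀ i, ∑ k, πθ i k = 1) (h : DCA πstar πθ = 0) (i : Fin m) : πθ i = πstar i := by
  rw [DCA_eq_neg_sum_mul_log_meanRatio, neg_eq_zero] at h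
  have hmean : ∀ κ, meanRatio πstar πθ κ = 1 :=
    eq_one_of_sum_mul_log_eq_zero (fun κ => prod_pos fun i _ => hstar_pos i (κ i))
      (meanRatio_pos hm hstar_pos hθ_pos)
      (by rw [sum_mul_meanRatio hm hstar_pos hstar_sum hθ_sum, sum_pi_prod_eq_one hstar_sum]) h
  have hconst : ∀ κ : Fin m → Fin K, ∑ j, πθ j (κ j) / πstar j (κ j) = m := fun κ => by
    have := hmean κ
    rw [meanRatio] at this
    field_simp at this
    linarith
  funext k
  have hratio : πθ i k / πstar i k = 1 := by
    calc πθ i k / πstar i k = ∑ k', πstar i k' * (πθ i k / πstar i k) := by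
          rw [← sum_mul, hstar_sum, one_mul]
      _ = ∑ k', πθ i k' := sum_congr rfl fun k' _ => by
          rw [apply_eq_of_sum_apply_eq (r := fun j k => πθ j k / πstar j k) hconst i k k',
            mul_div_cancel₀ _ (hstar_pos i k').ne']
      _ = 1 := hθ_sum i
  exact (div_eq_one_iff_eq (hstar_pos i k).ne').1 hratio

lemma DCA_self (hstar : ∀ i k, πstar i k ≠ 0) : DCA πstar πstar = 0 := by
  obtain rfl | hm := m.eq_zero_or_pos
  · simp [DCA]
  · simp [DCA, hstar, hm.ne']

end DCA

theorem DCA_sandwich_general (m K : ℕ) (hm : 1 ≤ m)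
    (πstar πθ : Fin m → Fin K → ℝ)
    (hstar_pos : ∀ i k, 0 < πstar i k) (hθ_pos : ∀ i k, 0 < πθ i k)
    (hstar_sum : ∀ i, ∑ k, πstar i k = 1) (hθ_sum : ∀ i, ∑ k, πθ i k = 1) :
    DCA πstar πθ ≤ (1 / (m : ℝ)) * ∑ i, KLdiv (πstar i) (πθ i) ∧
      0 ≤ DCA πstar πθ ∧
      (DCA πstar πθ = 0 ↔ ∀ i, πθ i = πstar i) :=
  ⟨DCA_le_mean_KLdiv hm hstar_pos hθ_pos hstar_sum,
    DCA_nonneg hm hstar_pos hθ_pos hstar_sum hθ_sum,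
    eq_of_DCA_eq_zero hm hstar_pos hθ_pos hstar_sum hθ_sum,
    fun h => by rw [funext h]; exact DCA_self fun i k => (hstar_pos i k).ne'⟩

/-- The CA divergence is sandwiched between `0` and the average KL divergence,
with `D_CA = 0` iff `π_{iθ} = π*_i` for every `i`. -/
theorem DCA_sandwich (m K : ℕ) (hm : 1 ≤ m) (hK : 2 ≤ K)
    (πstar πθ : Fin m → Fin K → ℝ)
    (hstar_pos : ∀ i k, 0 < πstar i k) (hθ_pos : ∀ i k, 0 < πθ i k)
    (hstar_sum : ∀ i, ∑ k, πstar i k = 1) (hθ_sum : ∀ i, ∑ k, πθ i k = 1) :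
    DCA πstar πθ ≤ (1 / (m : ℝ)) * ∑ i, KLdiv (πstar i) (πθ i) ∧
      0 ≤ DCA πstar πθ ∧
      (DCA πstar πθ = 0 ↔ ∀ i, πθ i = πstar i) :=
  DCA_sandwich_general m K hm πstar πθ hstar_pos hθ_pos hstar_sum hθ_sum
end
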